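/- Let m and n be positive integers, let H be the (m,n)-Horadam sequence, and for k ≥ 0 set t_k = H_{k+1}^2 + H_{k+1}·H_k + H_k^2. Then for all integers k ≥ 1 and l ≥ 1 with l ≠ k, one has t_l ≠ t_k, and in fact |t_l - t_k| > 1. -/
import Mathlib


/-- The `(m,n)`-Horadam sequence: `H 0 = m`, `H 1 = n`, `H k = H (k-1) + H (k-2)`. -/
def horadam (m n : ℤ) : ℕ → ℤ
  | 0 => m
  | 1 => n
  | k + 2 => horadam m n (k + 1) + horadam m n k

/-- `t k = H (k+1) ^ 2 + H (k+1) * H k + H k ^ 2`. -/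
def tSeq (m n : ℤ) (k : ℕ) : ℤ :=
  (horadam m n (k + 1)) ^ 2 + horadam m n (k + 1) * horadam m n k + (horadam m n k) ^ 2

lemma horadam_pos (m n : ℤ) (hm : 0 < m) (hn : 0 < n) : ∀ k, 0 < horadam m n k
  | 0 => hm
  | 1 => hn
  | k + 2 => by
      show 0 < horadam m n (k + 1) + horadam m n k
      exact add_pos (horadam_pos m n hm hn (k + 1)) (horadam_pos m n hm hn k)

lemma tSeq_step (m n : ℤ) (hm : 0 < m) (hn : 0 < n) (k : ℕ) :
    tSeq m n k + 3 ≤ tSeq m n (k + 1) := by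
  have ha := horadam_pos m n hm hn k
  have hb := horadam_pos m n hm hn (k + 1)
  show tSeq m n k + 3 ≤ tSeq m n (k + 1)
  simp only [tSeq]
  have h2 : horadam m n (k + 2) = horadam m n (k + 1) + horadam m n k := rfl
  rw [h2]
  nlinarith [mul_pos ha hb, sq_nonneg (horadam m n (k + 1))]

lemma tSeq_mono (m n : ℤ) (hm : 0 < m) (hn : 0 < n) :
    ∀ a b : ℕ, a < b → tSeq m n a + 3 ≤ tSeq m n b := by
  intro a b hab
  induction b with
  | zero => omega
  | succ b ih =>
      rcases Nat.lt_succ_iff_lt_or_eq.mp hab with h | h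
      · exact le_trans (ih h) (by linarith [tSeq_step m n hm hn b])
      · subst h; exact tSeq_step m n hm hn a

theorem tSeq_injective (m n : ℤ) (hm : 0 < m) (hn : 0 < n) :
    ∀ k : ℕ, 1 ≤ k → ∀ l : ℕ, 1 ≤ l → l ≠ k →
      tSeq m n l ≠ tSeq m n k ∧ 1 < |tSeq m n l - tSeq m n k| := by
  intro k _ l _ hlk
  rcases Nat.lt_or_ge l k with h | h
  · have := tSeq_mono m n hm hn l k h
    constructor
    · intro heq; omega
    · rw [abs_of_neg (show tSeq m n l - tSeq m n k < 0 by linarith)]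
      linarith
  · have hlt : k < l := lt_of_le_of_ne h (Ne.symm hlk)
    have := tSeq_mono m n hm hn k l hlt
    constructor
    · intro heq; omega
    · rw [abs_of_pos (by linarith)]
      linarith
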